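/- The Poisson bracket on (𝕋, Ω), defined by {Φ,Ψ}^𝕋 = Ω(X_Φ, X_Ψ), has the representation {Φ,Ψ}^𝕋_{(E,B)} = (δΦ/δB, d_A^∗(δΨ/δE))₁ − (δΨ/δB, d_A^∗(δΦ/δE))₁ = (d_A(δΦ/δB), δΨ/δE)₂ − (d_A(δΨ/δB), δΦ/δE)₂. -/
import Mathlib

open scoped RealInnerProductSpace

/-- The Poisson bracket on (𝕋, Ω), {Φ,Ψ}^𝕋 = Ω(X_Φ, X_Ψ) with
X_Φ = (−δΦ/δB, δΦ/δE), has the representation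
{Φ,Ψ}^𝕋 = (δΦ/δB, d_A^∗(δΨ/δE))₁ − (δΨ/δB, d_A^∗(δΦ/δE))₁
        = (d_A(δΦ/δB), δΨ/δE)₂ − (d_A(δΨ/δB), δΦ/δE)₂. -/
theorem poisson_bracket_representation
    (V W : Type*) [NormedAddCommGroup V] [InnerProductSpace ℝ V]
    [NormedAddCommGroup W] [InnerProductSpace ℝ W]
    (dA : V →ₗ[ℝ] W) (dAstar : W →ₗ[ℝ] V)
    (hadj : ∀ (v : V) (w : W), ⟪dA v, w⟫ = ⟪v, dAstar w⟫)
    (Ω : (V × W) → (V × W) → ℝ)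
    (hΩ : ∀ u₁ u₂ : V × W,
        Ω u₁ u₂ = ⟪u₂.1, dAstar u₁.2⟫ - ⟪u₁.1, dAstar u₂.2⟫)
    -- field derivatives of Φ and Ψ
    (gEΦ gEΨ : W) (gBΦ gBΨ : V)
    -- the Poisson bracket {Φ,Ψ}^𝕋 = Ω(X_Φ, X_Ψ)
    (bracket : ℝ)
    (hbracket : bracket = Ω (-gBΦ, gEΦ) (-gBΨ, gEΨ)) :
    bracket = ⟪gBΦ, dAstar gEΨ⟫ - ⟪gBΨ, dAstar gEΦ⟫
    ∧ bracket = ⟪dA gBΦ, gEΨ⟫ - ⟪dA gBΨ, gEΦ⟫ := by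
  rw [hbracket, hΩ]
  simp only [inner_neg_left]
  constructor
  · ring
  · rw [hadj, hadj]; ring
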